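/- For every real h > 1, the quantity I(h) := (1/16)·[4h^4·log(h) + (h^2-1)(1-3h^2)] is strictly positive; equivalently, 4h^4·log(h) > (h^2-1)(3h^2-1) for all h > 1. -/

import Mathlib

lemma log_lb_aux {h : ℝ} (hh : 1 < h) : (h ^ 2 - 1) < 2 * h ^ 2 * Real.log h := by
  have h0 : (0:ℝ) < h := lt_trans one_pos hh
  have h2 : (0:ℝ) < h ^ 2 := by positivity
  have hne : (1:ℝ) / h ^ 2 ≠ 1 := by
    have : h ^ 2 ≠ 1 := by nlinarith
    simp [div_eq_one_iff_eq (ne_of_gt h2), this]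
  have key := Real.log_lt_sub_one_of_pos (by positivity : (0:ℝ) < 1 / h ^ 2) hne
  rw [Real.log_div one_ne_zero (ne_of_gt h2), Real.log_one, Real.log_pow] at key
  push_cast at key
  have hlog : (1 - 1 / h ^ 2) / 2 < Real.log h := by linarith
  rw [div_lt_iff₀ (by norm_num : (0:ℝ) < 2)] at hlog
  have h2' : h ^ 2 ≠ 0 := ne_of_gt h2
  nlinarith [mul_lt_mul_of_pos_left hlog h2, mul_one_div_cancel h2']

lemma g_hasDeriv {x : ℝ} (hx : 0 < x) :
    HasDerivAt (fun t : ℝ => 4 * t ^ 4 * Real.log t - (3 * t ^ 4 - 4 * t ^ 2 + 1))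
      (16 * x ^ 3 * Real.log x - 8 * x ^ 3 + 8 * x) x := by
  have h1 : HasDerivAt (fun t : ℝ => t ^ 4) (4 * x ^ 3) x := by
    simpa using hasDerivAt_pow 4 x
  have h2 : HasDerivAt Real.log (1 / x) x := by
    simpa [one_div] using Real.hasDerivAt_log (ne_of_gt hx)
  have h3 := ((h1.mul h2).const_mul 4)
  have h4 : HasDerivAt (fun t : ℝ => 3 * t ^ 4 - 4 * t ^ 2 + 1)
      (12 * x ^ 3 - 8 * x) x := by
    have p4 : HasDerivAt (fun t : ℝ => t ^ 4) (4 * x ^ 3) x := by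
      simpa using hasDerivAt_pow 4 x
    have p2 : HasDerivAt (fun t : ℝ => t ^ 2) (2 * x) x := by
      simpa using hasDerivAt_pow 2 x
    have := ((p4.const_mul 3).sub (p2.const_mul 4)).add_const 1
    exact this.congr_deriv (by ring)
  have hd := h3.sub h4
  have hx' : x ≠ 0 := ne_of_gt hx
  have heq : (fun t : ℝ => 4 * t ^ 4 * Real.log t - (3 * t ^ 4 - 4 * t ^ 2 + 1))
      = fun y : ℝ => 4 * (y ^ 4 * Real.log y) - (3 * y ^ 4 - 4 * y ^ 2 + 1) := by
    ext t; ring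
  rw [heq, show 16 * x ^ 3 * Real.log x - 8 * x ^ 3 + 8 * x
      = 4 * (4 * x ^ 3 * Real.log x + x ^ 4 * (1 / x)) - (12 * x ^ 3 - 8 * x) from by
    field_simp; ring]
  exact hd

lemma g_pos {h : ℝ} (hh : 1 < h) :
    0 < 4 * h ^ 4 * Real.log h - (3 * h ^ 4 - 4 * h ^ 2 + 1) := by
  set g : ℝ → ℝ := fun t => 4 * t ^ 4 * Real.log t - (3 * t ^ 4 - 4 * t ^ 2 + 1) with hg
  have hmono : StrictMonoOn g (Set.Ici (1:ℝ)) := by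
    apply strictMonoOn_of_deriv_pos (convex_Ici 1)
    · intro x hx
      have hx0 : (0:ℝ) < x := lt_of_lt_of_le one_pos hx
      exact ((g_hasDeriv hx0).continuousAt).continuousWithinAt
    · intro x hx
      rw [interior_Ici] at hx
      have hx1 : 1 < x := hx
      have hx0 : (0:ℝ) < x := lt_trans one_pos hx1
      rw [(g_hasDeriv hx0).deriv]
      have key := log_lb_aux hx1
      nlinarith [mul_lt_mul_of_pos_left key (show (0:ℝ) < 8*x by positivity)]
  have h1 : g 1 < g h := hmono (Set.self_mem_Ici) (Set.mem_Ici.mpr (le_of_lt hh)) hh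
  have h0 : g 1 = 0 := by norm_num [hg]
  simp only [hg] at h1
  norm_num [Real.log_one] at h1
  linarith [h1]

theorem stmt_2 (I : ℝ → ℝ)
    (hI : ∀ h, I h = (1 / 16) * (4 * h ^ 4 * Real.log h + (h ^ 2 - 1) * (1 - 3 * h ^ 2))) :
    ∀ h : ℝ, 1 < h →
      0 < I h ∧ 4 * h ^ 4 * Real.log h > (h ^ 2 - 1) * (3 * h ^ 2 - 1) := by
  intro h hh
  have hg := g_pos hh
  constructor
  · rw [hI h]; nlinarith
  · nlinarith
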